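/- Every element of Heis₃(ℚ) can be written (a/c, b/c) where a, b, c ∈ ℤ[i] generate the unit ideal of ℤ[i], c ≠ 0 and 2 Re(a·conj(c)) = |b|²; moreover this representation is unique up to multiplication of a, b and c by a common unit u ∈ {1, −1, i, −i}. -/

import Mathlib

open MeasureTheory Filter

/-- Membership in the Heisenberg group
`Heis₃ = {(w₀,w) ∈ ℂ × ℂ : 2 Re w₀ = |w|²}`. -/
def InHeis (x : ℂ × ℂ) : Prop := 2 * x.1.re = ‖x.2‖ ^ 2

/-- The group law of `Heis₃`: the left translation of `x` by `g`, namely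
`(g₀,g)·(x₀,x) = (g₀ + x₀ + x·conj(g), g + x)`. -/
noncomputable def heisMul (g x : ℂ × ℂ) : ℂ × ℂ :=
  (g.1 + x.1 + x.2 * (starRingEnd ℂ) g.2, g.2 + x.2)

/-- Membership in `Heis₃(ℤ)`: the components lie in `ℤ[i]`. -/
def InHeisZ (g : ℂ × ℂ) : Prop :=
  InHeis g ∧ (∃ a : GaussianInt, g.1 = GaussianInt.toComplex a) ∧
    ∃ b : GaussianInt, g.2 = GaussianInt.toComplex b

/-- `(a, b, c)` is an admissible coprime integral representation of the rational point
`x = (a/c, b/c)` of `Heis₃(ℚ)`: here `a, b, c ∈ ℤ[i]` generate the unit ideal of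
`ℤ[i]`, `c ≠ 0` and `2 Re(a·conj c) = |b|²`. Such a representation is unique up to
multiplication of `a, b, c` by a common unit of `ℤ[i]`; the height of `x` is
`H(x) = |c|`. -/
def HeisRatRep (x : ℂ × ℂ) (a b c : GaussianInt) : Prop :=
  (∃ u v w : GaussianInt, u * a + v * b + w * c = 1) ∧ c ≠ 0 ∧
    x.1 = GaussianInt.toComplex a / GaussianInt.toComplex c ∧
    x.2 = GaussianInt.toComplex b / GaussianInt.toComplex c ∧
    2 * (GaussianInt.toComplex a * (starRingEnd ℂ) (GaussianInt.toComplex c)).re =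
      ‖GaussianInt.toComplex b‖ ^ 2

/-- The Haar measure of `Heis₃`, as a measure on `ℂ × ℂ`: the image of
`(1/2)·(Lebesgue measure on ℝ³)` under `(x,y,t) ↦ ((x²+y²)/2 + it/2, x+iy)`. -/
noncomputable def haarHeis : Measure (ℂ × ℂ) :=
  Measure.map
    (fun p : ℝ × ℝ × ℝ =>
      ((((p.1 ^ 2 + p.2.1 ^ 2) / 2 : ℝ) : ℂ) + ((p.2.2 / 2 : ℝ) : ℂ) * Complex.I,
        ((p.1 : ℝ) : ℂ) + ((p.2.1 : ℝ) : ℂ) * Complex.I))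
    ((1 / 2 : ENNReal) • volume)

/-- The Riemann zeta value `ζ(3)`. -/
noncomputable def zetaThree : ℝ := ∑' n : ℕ, 1 / ((n : ℝ) + 1) ^ 3

/-- The Dedekind zeta value `ζ_{ℚ(i)}(3) = (1/4)·Σ_{z ∈ ℤ[i], z ≠ 0} |z|⁻⁶`. -/
noncomputable def zetaQi3 : ℝ :=
  (1 / 4) * ∑' w : {w : GaussianInt // w ≠ 0}, 1 / ‖GaussianInt.toComplex w.1‖ ^ 6

/-- `x ∈ Heis₃(ℚ)`: `x ∈ Heis₃` and both coordinates are Gaussian rationals. -/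
def InHeisQ (x : ℂ × ℂ) : Prop :=
  InHeis x ∧
    (∃ p q : GaussianInt, q ≠ 0 ∧ x.1 = GaussianInt.toComplex p / GaussianInt.toComplex q) ∧
    ∃ p q : GaussianInt, q ≠ 0 ∧ x.2 = GaussianInt.toComplex p / GaussianInt.toComplex q

/-! Clearing denominators and dividing by a gcd gives a representation whose entries generate
the unit ideal. Two such representations of the same point satisfy `a c' = a' c` and
`b c' = b' c`; multiplying a Bézout relation for one triple by the denominator of the other
shows `c ∣ c'` and `c' ∣ c`, so the denominators, and hence the triples, differ by a unit. -/

section Unimodular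

variable {R : Type*}

theorem exists_eq_mul_of_unimodular_triple [EuclideanDomain R] (a₀ b₀ : R) {c₀ : R}
    (hc₀ : c₀ ≠ 0) :
    ∃ g a b c : R, g ≠ 0 ∧ a₀ = g * a ∧ b₀ = g * b ∧ c₀ = g * c ∧
      ∃ u v w : R, u * a + v * b + w * c = 1 := by
  classical
  set d := EuclideanDomain.gcd a₀ b₀
  set g := EuclideanDomain.gcd d c₀
  have hg : g ≠ 0 := fun h => hc₀ (EuclideanDomain.gcd_eq_zero_iff.1 h).2
  obtain ⟨a, ha⟩ :=
    (EuclideanDomain.gcd_dvd_left d c₀).trans (EuclideanDomain.gcd_dvd_left a₀ b₀)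
  obtain ⟨b, hb⟩ :=
    (EuclideanDomain.gcd_dvd_left d c₀).trans (EuclideanDomain.gcd_dvd_right a₀ b₀)
  obtain ⟨c, hc⟩ := EuclideanDomain.gcd_dvd_right d c₀
  open EuclideanDomain in
  refine ⟨g, a, b, c, hg, ha, hb, hc,
    gcdA a₀ b₀ * gcdA d c₀, gcdB a₀ b₀ * gcdA d c₀, gcdB d c₀, mul_left_cancel₀ hg ?_⟩
  linear_combination -(gcdA a₀ b₀ * gcdA d c₀) * ha - (gcdB a₀ b₀ * gcdA d c₀) * hb -
    gcdB d c₀ * hc - gcdA d c₀ * gcd_eq_gcd_ab a₀ b₀ - gcd_eq_gcd_ab d c₀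

theorem dvd_of_mul_eq_mul_of_unimodular [CommRing R] {a b c a' b' c' : R}
    (ha : a * c' = a' * c) (hb : b * c' = b' * c)
    (h : ∃ u v w : R, u * a + v * b + w * c = 1) : c ∣ c' := by
  obtain ⟨u, v, w, h⟩ := h
  refine ⟨u * a' + v * b' + w * c', ?_⟩
  calc c' = u * (a * c') + v * (b * c') + w * c * c' := by
        linear_combination (-c') * h
    _ = c * (u * a' + v * b' + w * c') := by rw [ha, hb]; ring

theorem exists_isUnit_of_mul_eq_mul_of_unimodular [CommRing R] [IsDomain R]
    {a b c a' b' c' : R} (hc : c ≠ 0) (ha : a * c' = a' * c) (hb : b * c' = b' * c)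
    (h : ∃ u v w : R, u * a + v * b + w * c = 1)
    (h' : ∃ u v w : R, u * a' + v * b' + w * c' = 1) :
    ∃ u : R, IsUnit u ∧ a' = u * a ∧ b' = u * b ∧ c' = u * c := by
  obtain ⟨u, hu⟩ := associated_of_dvd_dvd (dvd_of_mul_eq_mul_of_unimodular ha hb h)
    (dvd_of_mul_eq_mul_of_unimodular ha.symm hb.symm h')
  refine ⟨u, u.isUnit, mul_right_cancel₀ hc ?_, mul_right_cancel₀ hc ?_, by rw [← hu, mul_comm]⟩
  · rw [← ha, ← hu]; ring
  · rw [← hb, ← hu]; ring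

end Unimodular

theorem RingHom.mul_eq_mul_of_div_eq_div {R K : Type*} [CommRing R] [Field K] {f : R →+* K}
    (hf : Function.Injective f) {a c a' c' : R} (hc : f c ≠ 0) (hc' : f c' ≠ 0)
    (h : f a / f c = f a' / f c') : a * c' = a' * c :=
  hf <| by rw [map_mul, map_mul]; exact (div_eq_div_iff hc hc').1 h

theorem Complex.two_re_mul_conj_eq_sq_norm {A B C : ℂ} (hC : C ≠ 0)
    (h : 2 * (A / C).re = ‖B / C‖ ^ 2) : 2 * (A * (starRingEnd ℂ) C).re = ‖B‖ ^ 2 := by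
  have hC' : Complex.normSq C ≠ 0 := Complex.normSq_eq_zero.not.2 hC
  rw [norm_div, div_pow, Complex.sq_norm, Complex.sq_norm, Complex.div_re] at h
  rw [Complex.sq_norm, Complex.mul_re, Complex.conj_re, Complex.conj_im]
  field_simp at h
  linear_combination h

open GaussianInt

theorem GaussianInt.toComplex_ne_zero {z : GaussianInt} (hz : z ≠ 0) : toComplex z ≠ 0 :=
  toComplex_eq_zero.not.2 hz

theorem InHeisQ.exists_heisRatRep {x : ℂ × ℂ} (hx : InHeisQ x) :
    ∃ a b c : GaussianInt, HeisRatRep x a b c := by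
  obtain ⟨hheis, ⟨p₁, q₁, hq₁, e₁⟩, ⟨p₂, q₂, hq₂, e₂⟩⟩ := hx
  obtain ⟨g, a, b, c, hg, ha, hb, hc, hunim⟩ :=
    exists_eq_mul_of_unimodular_triple (p₁ * q₂) (p₂ * q₁) (mul_ne_zero hq₁ hq₂)
  have hc0 : c ≠ 0 := right_ne_zero_of_mul (hc ▸ mul_ne_zero hq₁ hq₂)
  have hg' := toComplex_ne_zero hg
  have hq₁' := toComplex_ne_zero hq₁
  have hq₂' := toComplex_ne_zero hq₂
  have e₁' : x.1 = toComplex a / toComplex c := by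
    rw [e₁, ← mul_div_mul_right _ _ hq₂', ← map_mul, ← map_mul, ha, hc, map_mul, map_mul,
      mul_div_mul_left _ _ hg']
  have e₂' : x.2 = toComplex b / toComplex c := by
    rw [e₂, ← mul_div_mul_right _ _ hq₁', ← map_mul, ← map_mul, hb, mul_comm q₂, hc, map_mul,
      map_mul, mul_div_mul_left _ _ hg']
  refine ⟨a, b, c, hunim, hc0, e₁', e₂', ?_⟩
  refine Complex.two_re_mul_conj_eq_sq_norm (toComplex_ne_zero hc0) ?_
  rw [← e₁', ← e₂']
  exact hheis

theorem HeisRatRep.exists_isUnit_mul {x : ℂ × ℂ} {a b c a' b' c' : GaussianInt}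
    (h : HeisRatRep x a b c) (h' : HeisRatRep x a' b' c') :
    ∃ u : GaussianInt, IsUnit u ∧ a' = u * a ∧ b' = u * b ∧ c' = u * c := by
  obtain ⟨hunim, hc, e₁, e₂, -⟩ := h
  obtain ⟨hunim', hc', e₁', e₂', -⟩ := h'
  have cross {p p' : GaussianInt} (e : toComplex p / toComplex c = toComplex p' / toComplex c') :
      p * c' = p' * c :=
    RingHom.mul_eq_mul_of_div_eq_div toComplex_injective (toComplex_ne_zero hc)
      (toComplex_ne_zero hc') e
  exact exists_isUnit_of_mul_eq_mul_of_unimodular hc (cross (e₁ ▸ e₁')) (cross (e₂ ▸ e₂'))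
    hunim hunim'

/-- Every element of `Heis₃(ℚ)` can be written `(a/c, b/c)` with `a, b, c ∈ ℤ[i]`
generating the unit ideal, `c ≠ 0` and `2 Re(a·conj c) = |b|²`; moreover this
representation is unique up to multiplication of `a`, `b`, `c` by a common unit
`u ∈ {1, −1, i, −i}` of `ℤ[i]`. -/
theorem heisenberg_rational_coprime_representation (x : ℂ × ℂ) (hx : InHeisQ x) :
    ∃ a b c : GaussianInt, HeisRatRep x a b c ∧
      ∀ a' b' c' : GaussianInt, HeisRatRep x a' b' c' →
        ∃ u : GaussianInt, IsUnit u ∧ a' = u * a ∧ b' = u * b ∧ c' = u * c := by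
  obtain ⟨a, b, c, h⟩ := hx.exists_heisRatRep
  exact ⟨a, b, c, h, fun _ _ _ h' => h.exists_isUnit_mul h'⟩
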